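/- Let u > 0, v > 0, δ ∈ ℝ, and m a nonzero integer with μ = m/(uv). Set φ̄_{l,m,n}(x,y,z) = D_l(√(2/|μ|)(μx + n/v)) e^{iμz} e^{i(n/v)y}. Then under the Heisenberg left translation a₁·(x,y,z) = (x+u, y+δ, z+uy) one has φ̄_{l,m,n}(a₁·(x,y,z)) = e^{i(δ/v)n} φ̄_{l,m,n+m}(x,y,z). -/
import Mathlib


noncomputable def hermiteR (l : ℕ) (z : ℝ) : ℝ :=
  Polynomial.aeval z (Polynomial.hermite l)

noncomputable def weberD (l : ℕ) (z : ℝ) : ℝ :=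
  Real.exp (-z ^ 2 / 4) * hermiteR l z

/-- The mode function φ̄_{l,m,n} on the auxiliary manifold, with μ = m/(uv). -/
noncomputable def phibarMN (u v : ℝ) (l : ℕ) (m n : ℤ) (p : ℝ × ℝ × ℝ) : ℂ :=
  (weberD l (Real.sqrt (2 / |(m / (u * v) : ℝ)|) * ((m / (u * v) : ℝ) * p.1 + n / v)) : ℂ) *
    Complex.exp (Complex.I * ((m / (u * v) : ℝ) : ℂ) * p.2.2) *
    Complex.exp (Complex.I * ((n / v : ℝ) : ℂ) * p.2.1)

theorem phibar_transformation_law (u v δ : ℝ) (hu : 0 < u) (hv : 0 < v)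
    (m : ℤ) (hm : m ≠ 0) (l : ℕ) (n : ℤ) (p : ℝ × ℝ × ℝ) :
    phibarMN u v l m n (p.1 + u, p.2.1 + δ, p.2.2 + u * p.2.1) =
      Complex.exp (Complex.I * ((δ / v : ℝ) : ℂ) * (n : ℂ)) *
        phibarMN u v l m (n + m) p := by
  have hu' : (u : ℝ) ≠ 0 := hu.ne'
  have hv' : (v : ℝ) ≠ 0 := hv.ne'
  unfold phibarMN
  simp only
  have harg : (m / (u * v) : ℝ) * (p.1 + u) + n / v
      = (m / (u * v) : ℝ) * p.1 + (↑(n + m)) / v := by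
    push_cast
    field_simp
    ring
  rw [harg]
  have hcu : (u : ℂ) ≠ 0 := by exact_mod_cast hu'
  have hcv : (v : ℂ) ≠ 0 := by exact_mod_cast hv'
  have key : Complex.exp (Complex.I * ((m / (u * v) : ℝ) : ℂ) * ((p.2.2 + u * p.2.1 : ℝ) : ℂ)) *
        Complex.exp (Complex.I * ((n / v : ℝ) : ℂ) * ((p.2.1 + δ : ℝ) : ℂ))
      = Complex.exp (Complex.I * ((δ / v : ℝ) : ℂ) * (n : ℂ)) *
        (Complex.exp (Complex.I * ((m / (u * v) : ℝ) : ℂ) * (p.2.2 : ℂ)) *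
          Complex.exp (Complex.I * ((↑(n + m) / v : ℝ) : ℂ) * (p.2.1 : ℂ))) := by
    rw [← Complex.exp_add, ← Complex.exp_add, ← Complex.exp_add]
    congr 1
    push_cast
    field_simp
    ring
  calc (weberD l (Real.sqrt (2 / |(m / (u * v) : ℝ)|) *
          ((m / (u * v) : ℝ) * p.1 + (↑(n + m)) / v)) : ℂ) *
        Complex.exp (Complex.I * ((m / (u * v) : ℝ) : ℂ) * ((p.2.2 + u * p.2.1 : ℝ) : ℂ)) *
        Complex.exp (Complex.I * ((n / v : ℝ) : ℂ) * ((p.2.1 + δ : ℝ) : ℂ))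
      = (weberD l (Real.sqrt (2 / |(m / (u * v) : ℝ)|) *
          ((m / (u * v) : ℝ) * p.1 + (↑(n + m)) / v)) : ℂ) *
        (Complex.exp (Complex.I * ((m / (u * v) : ℝ) : ℂ) * ((p.2.2 + u * p.2.1 : ℝ) : ℂ)) *
        Complex.exp (Complex.I * ((n / v : ℝ) : ℂ) * ((p.2.1 + δ : ℝ) : ℂ))) := by ring
    _ = _ := by rw [key]; ring
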